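/- arXiv:math/9911007 — 5 statements merged into one kernel-verified Lean document; each statement's English description precedes it below -/
import Mathlib

section
/- Let A be a unital C*-algebra with faithful state φ, and let (π, H, ξ) be the GNS representation of (A, φ). Let B ⊆ A be a unital C*-subalgebra, H_B the closure of {π(b)ξ : b ∈ B} in H, and P the orthogonal projection of H onto H_B. If there is a norm-dense subset X of A such that P π(x)|_{H_B} ∈ P π(B)|_{H_B} for every x ∈ X, then there exists a projection E of norm one from A onto B satisfying φ ∘ E = φ. -/
/-!
Let `C a = P π(a)|_K` be the compression of `π a` to `K`; it is contractive on `A`. As `K` is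
`π(B)`-invariant, `C` restricted to `B` is a *-homomorphism `B → B(K)`, and it is injective
because `ξ ∈ K` is separating for `B` (faithfulness of `φ`), hence isometric. So `C(B)` is
closed, and `C(X) ⊆ C(B)` with `X` dense gives `C(A) = C(B)`. Then `E = (C|_B)⁻¹ ∘ C` is a
contractive projection onto `B`, and `φ(a) = ⟨ξ, C(a) ξ⟩` gives `φ ∘ E = φ`.
-/

open Function ContinuousLinearMap

theorem LinearMap.exists_contractive_projection_of_isometric_on {𝕜 E F : Type*} [NormedField 𝕜]
    [NormedAddCommGroup E] [NormedSpace 𝕜 E] [NormedAddCommGroup F] [NormedSpace 𝕜 F]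
    (C : E →ₗ[𝕜] F) (hC : ∀ a, ‖C a‖ ≤ ‖a‖) (B : Submodule 𝕜 E) [CompleteSpace B]
    (hCB : ∀ b ∈ B, ‖C b‖ = ‖b‖) {X : Set E} (hX : Dense X)
    (hXB : ∀ x ∈ X, ∃ b ∈ B, C x = C b) :
    ∃ Q : E →ₗ[𝕜] E, (∀ a, Q a ∈ B) ∧ (∀ b ∈ B, Q b = b) ∧ (∀ a, ‖Q a‖ ≤ ‖a‖) ∧
      ∀ a, C (Q a) = C a := by
  let CB : B →ₗᵢ[𝕜] F := ⟨C ∘ₗ B.subtype, fun b => hCB b b.2⟩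
  have hrange : ∀ a, C a ∈ LinearMap.range CB.toLinearMap := by
    have hXrange : C '' X ⊆ Set.range CB := by
      rintro _ ⟨x, hx, rfl⟩
      obtain ⟨b, hb, hxb⟩ := hXB x hx
      exact ⟨⟨b, hb⟩, hxb.symm⟩
    have hCcont : Continuous C := AddMonoidHomClass.continuous_of_bound C 1 (by simpa using hC)
    exact fun a => closure_minimal hXrange CB.isometry.isClosedEmbedding.isClosed_range
      (hCcont.range_subset_closure_image_dense hX ⟨a, rfl⟩)
  let R : E →ₗ[𝕜] B := CB.equivRange.symm.toLinearEquiv.toLinearMap ∘ₗ C.codRestrict _ hrange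
  have hCR : ∀ a, C (R a) = C a := fun a =>
    congrArg Subtype.val (CB.equivRange.apply_symm_apply ⟨C a, hrange a⟩)
  refine ⟨B.subtype ∘ₗ R, fun a => (R a).2, fun b hb => ?_, fun a => ?_, hCR⟩
  · exact congrArg Subtype.val (CB.injective (hCR b) : R b = ⟨b, hb⟩)
  · calc ‖(R a : E)‖ = ‖C (R a)‖ := (hCB _ (R a).2).symm
      _ = ‖C a‖ := by rw [hCR]
      _ ≤ ‖a‖ := hC a

theorem apply_mem_closure_orbit {R A H F S : Type*} [Semiring R] [TopologicalSpace H]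
    [AddCommMonoid H] [Module R H] [Mul A] [FunLike F A (H →L[R] H)]
    [MulHomClass F A (H →L[R] H)] [SetLike S A] [MulMemClass S A]
    (π : F) (B : S) (ξ : H) {b : A} (hb : b ∈ B) {h : H}
    (hh : h ∈ closure ((fun b => π b ξ) '' (B : Set A))) :
    π b h ∈ closure ((fun b => π b ξ) '' (B : Set A)) := by
  refine map_mem_closure (π b).continuous hh ?_
  rintro - ⟨b', hb', rfl⟩
  exact ⟨b * b', mul_mem hb hb', by simp⟩

namespace Submodule

variable {𝕜 H : Type*} [RCLike 𝕜] [NormedAddCommGroup H] [InnerProductSpace 𝕜 H]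
  (K : Submodule 𝕜 H) [K.HasOrthogonalProjection]

noncomputable def compression : (H →L[𝕜] H) →L[𝕜] (K →L[𝕜] K) :=
  compL 𝕜 K H K K.orthogonalProjectionOnto ∘L (compL 𝕜 K H H).flip K.subtypeL

@[simp]
theorem compression_apply (T : H →L[𝕜] H) (h : K) :
    K.compression T h = K.orthogonalProjectionOnto (T h) :=
  rfl

theorem norm_compression_le (T : H →L[𝕜] H) : ‖K.compression T‖ ≤ ‖T‖ :=
  opNorm_le_bound _ (norm_nonneg T) fun h =>
    (K.norm_orthogonalProjectionOnto_apply_le (T h)).trans (T.le_opNorm h)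

theorem inner_compression_apply (T : H →L[𝕜] H) (u v : K) :
    inner 𝕜 u (K.compression T v) = inner 𝕜 (u : H) (T v) := by
  simp

theorem compression_one : K.compression 1 = 1 := by
  ext h
  simp

theorem compression_mul (S : H →L[𝕜] H) {T : H →L[𝕜] H} (hT : ∀ h ∈ K, T h ∈ K) :
    K.compression (S * T) = K.compression S * K.compression T := by
  ext h
  simp [K.orthogonalProjectionOnto_mem_subspace_eq_self ⟨T h, hT h h.2⟩]

theorem compression_star [CompleteSpace H] [CompleteSpace K] (T : H →L[𝕜] H) :
    K.compression (star T) = star (K.compression T) := by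
  rw [star_eq_adjoint, star_eq_adjoint, eq_adjoint_iff]
  intro u v
  simp [adjoint_inner_left]

end Submodule

namespace StarAlgHom

variable {𝕜 H S : Type*} [RCLike 𝕜] [NormedAddCommGroup H] [InnerProductSpace 𝕜 H]
  [CompleteSpace H] (K : Submodule 𝕜 H) [CompleteSpace K]

section Semiring

variable [Semiring S] [Algebra 𝕜 S] [Star S]
  (π : S →⋆ₐ[𝕜] (H →L[𝕜] H)) (hπK : ∀ s, ∀ h ∈ K, π s h ∈ K)

noncomputable def compression : S →⋆ₐ[𝕜] (K →L[𝕜] K) where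
  toFun s := K.compression (π s)
  map_one' := by simp [K.compression_one]
  map_mul' s t := by simp [K.compression_mul _ (hπK t)]
  map_zero' := by simp
  map_add' := by simp
  commutes' c := by simp [Algebra.algebraMap_eq_smul_one, K.compression_one]
  map_star' s := by rw [map_star, K.compression_star]

theorem compression_apply (s : S) : π.compression K hπK s = K.compression (π s) :=
  rfl

end Semiring

theorem compression_injective [Ring S] [Algebra 𝕜 S] [Star S]
    (π : S →⋆ₐ[𝕜] (H →L[𝕜] H)) (hπK : ∀ s, ∀ h ∈ K, π s h ∈ K) {ξ : H} (hξ : ξ ∈ K)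
    (hsep : ∀ s, π s ξ = 0 → s = 0) : Injective (π.compression K hπK) := by
  refine (injective_iff_map_eq_zero _).mpr fun s hs => hsep s ?_
  have := congrArg (fun T : K →L[𝕜] K => (T ⟨ξ, hξ⟩ : H)) hs
  simpa [compression_apply,
    K.orthogonalProjectionOnto_mem_subspace_eq_self ⟨π s ξ, hπK s ξ hξ⟩] using this

end StarAlgHom

theorem gns_compression_gives_condExp_general
    {A : Type*} [CStarAlgebra A]
    {H : Type*} [NormedAddCommGroup H] [InnerProductSpace ℂ H] [CompleteSpace H]
    (φ : A →ₗ[ℂ] ℂ)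
    (hφ_faithful : ∀ a : A, φ (star a * a) = 0 → a = 0)
    (π : A →⋆ₐ[ℂ] (H →L[ℂ] H)) (ξ : H)
    (hGNS : ∀ a₁ a₂ : A, (inner ℂ (π a₂ ξ) (π a₁ ξ) : ℂ) = φ (star a₂ * a₁))
    (B : StarSubalgebra ℂ A) (hBclosed : IsClosed (B : Set A)) (hB1 : (1 : A) ∈ B)
    (K : Submodule ℂ H)
    (hK : (K : Set H) = closure ((fun b : A => π b ξ) '' (B : Set A)))
    [K.HasOrthogonalProjection]
    (X : Set A) (hX : Dense X)
    (hcompress : ∀ x ∈ X, ∃ b ∈ B, ∀ h ∈ K,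
      (K.orthogonalProjectionOnto (π x h) : H) = K.orthogonalProjectionOnto (π b h)) :
    ∃ E : A →ₗ[ℂ] A, (∀ a : A, E a ∈ B) ∧ (∀ b ∈ B, E b = b) ∧
      (∀ a : A, ‖E a‖ ≤ ‖a‖) ∧ (∀ a : A, φ (E a) = φ a) := by
  have : IsClosed (B : Set A) := hBclosed -- makes `B` a C⋆-algebra
  have : CompleteSpace (Subalgebra.toSubmodule B.toSubalgebra) := hBclosed.completeSpace_coe
  have : CompleteSpace K := (hK ▸ isClosed_closure : IsClosed (K : Set H)).completeSpace_coe
  have hξK : ξ ∈ K := by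
    rw [← SetLike.mem_coe, hK]
    exact subset_closure ⟨1, hB1, by simp⟩
  have hKinv : ∀ b : B, ∀ h ∈ K, π b h ∈ K := fun b h hh => by
    rw [← SetLike.mem_coe, hK] at hh ⊢
    exact apply_mem_closure_orbit π B ξ b.2 hh
  have hinj := (π.comp B.subtype).compression_injective K hKinv hξK fun b (hb : π b ξ = 0) =>
    Subtype.ext (hφ_faithful b (by rw [← hGNS, hb, inner_zero_left]))
  let C : A →ₗ[ℂ] (K →L[ℂ] K) := K.compression.toLinearMap ∘ₗ π.toAlgHom.toLinearMap
  have hXB : ∀ x ∈ X, ∃ b ∈ B, C x = C b := fun x hx => by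
    obtain ⟨b, hb, hxb⟩ := hcompress x hx
    exact ⟨b, hb, ContinuousLinearMap.ext fun h => Subtype.ext (hxb h h.2)⟩
  obtain ⟨E, hEB, hEid, hEnorm, hCE⟩ :=
    C.exists_contractive_projection_of_isometric_on (E := A) (F := K →L[ℂ] K)
      (fun a => (K.norm_compression_le (π a)).trans (NonUnitalStarAlgHom.norm_apply_le π a))
      (Subalgebra.toSubmodule B.toSubalgebra)
      (fun b hb => NonUnitalStarAlgHom.norm_map _ hinj ⟨b, hb⟩) hX hXB
  let ξK : K := ⟨ξ, hξK⟩
  have hφC : ∀ a, φ a = inner ℂ ξK (C a ξK) := fun a =>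
    (by simpa using (hGNS a 1).symm : φ a = inner ℂ ξ (π a ξ)).trans
      (K.inner_compression_apply (π a) ξK ξK).symm
  exact ⟨E, hEB, hEid, hEnorm, fun a => by rw [hφC, hCE, ← hφC]⟩

/-- Lemma 2.1: Let `(π, H, ξ)` be the GNS representation of a unital
C*-algebra `A` with faithful state `φ`, `B ⊆ A` a unital C*-subalgebra, `K = H_B` the
closure of `π(B)ξ` and `P` the orthogonal projection onto `K`.  If on a norm-dense set
`X ⊆ A` the compression `P π(x)|_K` lies in `P π(B)|_K`, then there is a norm-one
projection `E` from `A` onto `B` with `φ ∘ E = φ`. -/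
theorem gns_compression_gives_condExp
    {A : Type*} [CStarAlgebra A]
    {H : Type*} [NormedAddCommGroup H] [InnerProductSpace ℂ H] [CompleteSpace H]
    (φ : A →ₗ[ℂ] ℂ)
    (hφ_state : φ 1 = 1)
    (hφ_pos : ∀ a : A, 0 ≤ (φ (star a * a)).re ∧ (φ (star a * a)).im = 0)
    (hφ_faithful : ∀ a : A, φ (star a * a) = 0 → a = 0)
    (π : A →⋆ₐ[ℂ] (H →L[ℂ] H)) (ξ : H)
    (hcyclic : DenseRange fun a : A => π a ξ)
    (hGNS : ∀ a₁ a₂ : A, (inner ℂ (π a₂ ξ) (π a₁ ξ) : ℂ) = φ (star a₂ * a₁))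
    (B : StarSubalgebra ℂ A) (hBclosed : IsClosed (B : Set A)) (hB1 : (1 : A) ∈ B)
    (K : Submodule ℂ H)
    (hK : (K : Set H) = closure ((fun b : A => π b ξ) '' (B : Set A)))
    [K.HasOrthogonalProjection]
    (X : Set A) (hX : Dense X)
    (hcompress : ∀ x ∈ X, ∃ b ∈ B, ∀ h ∈ K,
      (K.orthogonalProjectionOnto (π x h) : H) = K.orthogonalProjectionOnto (π b h)) :
    ∃ E : A →ₗ[ℂ] A, (∀ a : A, E a ∈ B) ∧ (∀ b ∈ B, E b = b) ∧
      (∀ a : A, ‖E a‖ ≤ ‖a‖) ∧ (∀ a : A, φ (E a) = φ a) :=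
  gns_compression_gives_condExp_general φ hφ_faithful π ξ hGNS B hBclosed hB1 K hK X hX hcompress
end

section
/- Let A be a unital C*-algebra with faithful state φ, and let w ∈ A satisfy w*w = p and ww* = p₁ ≤ p where p is a projection, with φ(x w) = λ^{-1} φ(w x) for all x ∈ A, 0 < λ < 1. Define p₀ = p and pₙ = wⁿ (w*)ⁿ for n ≥ 1. Then each pₙ is a projection, p₀ ≥ p₁ ≥ p₂ ≥ ⋯, and φ(pₙ) = λⁿ φ(p) for all n ≥ 0. -/
/-- If `w` satisfies `w* w = p` (a projection), `w w* = p₁ ≤ p`, and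
`φ(x w) = λ⁻¹ φ(w x)` for all `x`, then `pₙ := wⁿ p (w*)ⁿ` (so `p₀ = p` and
`pₙ = wⁿ (w*)ⁿ` for `n ≥ 1`) are projections, decreasing, with `φ(pₙ) = λⁿ φ(p)`. -/
theorem powers_of_scaling_isometry
    {A : Type*} [CStarAlgebra A] [PartialOrder A] [StarOrderedRing A]
    (φ : A →ₗ[ℂ] ℂ)
    (hφ_state : φ 1 = 1)
    (hφ_pos : ∀ a : A, 0 ≤ (φ (star a * a)).re ∧ (φ (star a * a)).im = 0)
    (hφ_faithful : ∀ a : A, φ (star a * a) = 0 → a = 0)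
    (lam : ℝ) (hlam0 : 0 < lam) (hlam1 : lam < 1)
    (w p p₁ : A)
    (hp_proj : IsIdempotentElem p ∧ star p = p)
    (hp₁_proj : IsIdempotentElem p₁ ∧ star p₁ = p₁)
    (hw : star w * w = p) (hw' : w * star w = p₁) (hle : p₁ ≤ p)
    (hspec : ∀ x : A, φ (x * w) = (lam : ℂ)⁻¹ * φ (w * x))
    (pseq : ℕ → A) (hpseq : ∀ n : ℕ, pseq n = w ^ n * p * (star w) ^ n) :
    pseq 0 = p ∧
    (∀ n : ℕ, 1 ≤ n → pseq n = w ^ n * (star w) ^ n) ∧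
    (∀ n : ℕ, IsIdempotentElem (pseq n) ∧ star (pseq n) = pseq n) ∧
    (∀ n : ℕ, pseq (n + 1) ≤ pseq n) ∧
    (∀ n : ℕ, φ (pseq n) = (lam : ℂ) ^ n * φ p) := by
  obtain ⟨hpi, hps⟩ := hp_proj
  obtain ⟨hp1i, hp1s⟩ := hp₁_proj
  have hzero : ∀ a : A, star a * a = 0 → a = 0 := fun a ha =>
    hφ_faithful a (by rw [ha, map_zero])
  -- w * p = w
  have hwp : w * p = w := by
    have h2 : p * star w * w = p := by rw [mul_assoc, hw, hpi.eq]
    have key : star (w - w * p) * (w - w * p) = 0 := by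
      simp only [star_sub, star_mul, hps, sub_mul, mul_sub, ← mul_assoc, hw, h2, hpi.eq]
      abel
    exact (sub_eq_zero.mp (hzero _ key)).symm
  have hpws : p * star w = star w := by
    have := congrArg star hwp
    simpa [star_mul, hps] using this
  -- p₁ * p = p₁
  have hp1p : p₁ * p = p₁ := by
    have hc : (1 - p) * p₁ * (1 - p) ≤ (1 - p) * p * (1 - p) := by
      have := star_left_conjugate_le_conjugate hle (1 - p)
      simpa [star_sub, hps] using this
    have hrhs : (1 - p) * p * (1 - p) = 0 := by
      rw [sub_mul, one_mul, hpi.eq, sub_self, zero_mul]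
    have hform : (1 - p) * p₁ * (1 - p) = star (p₁ * (1 - p)) * (p₁ * (1 - p)) := by
      rw [star_mul, star_sub, star_one, hps, hp1s, ← mul_assoc, mul_assoc (1-p) p₁ p₁,
        hp1i.eq]
    have hnn : (0 : A) ≤ (1 - p) * p₁ * (1 - p) := by
      rw [hform]; exact star_mul_self_nonneg _
    have hz : p₁ * (1 - p) = 0 := hzero _ (by rw [← hform, le_antisymm (hrhs ▸ hc) hnn])
    rw [mul_sub, mul_one] at hz
    exact (sub_eq_zero.mp hz).symm
  have hpp1 : p * p₁ = p₁ := by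
    have := congrArg star hp1p
    simpa [star_mul, hps, hp1s] using this
  -- p * w = w
  have hpw : p * w = w := by
    have h2 : p * w * star w = p₁ := by rw [mul_assoc, hw', hpp1]
    have key : star (star w - star w * p) * (star w - star w * p) = 0 := by
      simp only [star_sub, star_mul, star_star, hps, sub_mul, mul_sub, ← mul_assoc,
        hw', h2, hp1p]
      abel
    have h3 : star w * p = star w := (sub_eq_zero.mp (hzero _ key)).symm
    have := congrArg star h3
    simpa [star_mul, star_star, hps] using this
  have hswp : star w * p = star w := by
    have := congrArg star hpw
    simpa [star_mul, hps] using this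
  -- power identities
  have hwnp : ∀ n : ℕ, 1 ≤ n → w ^ n * p = w ^ n := by
    intro n hn
    obtain ⟨m, rfl⟩ := Nat.exists_eq_add_of_le hn
    rw [add_comm, pow_succ, mul_assoc, hwp]
  have hswnp : ∀ n : ℕ, 1 ≤ n → (star w) ^ n * p = (star w) ^ n := by
    intro n hn
    obtain ⟨m, rfl⟩ := Nat.exists_eq_add_of_le hn
    rw [add_comm, pow_succ, mul_assoc, hswp]
  -- (star w)^(n+1) * w^(n+1) = p
  have hppow : ∀ n : ℕ, (star w) ^ (n+1) * w ^ (n+1) = p := by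
    intro n
    induction n with
    | zero => simpa using hw
    | succ k ih =>
      rw [pow_succ (star w), pow_succ' w, mul_assoc, ← mul_assoc (star w) w, hw,
        ← mul_assoc, hswnp (k+1) (by omega), ih]
  -- pseq n * p = pseq n
  have hpseqp : ∀ n : ℕ, pseq n * p = pseq n := by
    intro n
    rw [hpseq n]
    cases n with
    | zero => simp [hpi.eq]
    | succ m => rw [mul_assoc, hswnp (m+1) (by omega)]
  -- pseq (n+1) = w^n * p₁ * (star w)^n
  have hpseq1 : ∀ n : ℕ, pseq (n + 1) = w ^ n * p₁ * (star w) ^ n := by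
    intro n
    rw [hpseq, pow_succ w, pow_succ' (star w), mul_assoc (w ^ n) w p, hwp,
      ← mul_assoc (w ^ n * w) (star w) ((star w) ^ n), mul_assoc (w ^ n) w (star w), hw']
  refine ⟨?_, ?_, ?_, ?_, ?_⟩
  · simp [hpseq 0]
  · intro n hn
    rw [hpseq n, hwnp n hn]
  · intro n
    constructor
    · show pseq n * pseq n = pseq n
      cases n with
      | zero => simpa [hpseq 0] using hpi.eq
      | succ m =>
        have h := hpseq (m+1)
        rw [hwnp (m+1) (by omega)] at h
        rw [h, mul_assoc, ← mul_assoc ((star w)^(m+1)) (w^(m+1)) _, hppow m,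
          ← mul_assoc, hwnp (m+1) (by omega)]
    · rw [hpseq n]
      simp [star_mul, star_pow, star_star, hps, mul_assoc]
  · intro n
    rw [← sub_nonneg]
    have hq : (p - p₁) * (p - p₁) = p - p₁ := by
      rw [mul_sub, sub_mul, sub_mul, hpi.eq, hp1i.eq, hpp1, hp1p]
      abel
    have hdiff : pseq n - pseq (n+1)
        = star ((p - p₁) * (star w) ^ n) * ((p - p₁) * (star w) ^ n) := by
      rw [hpseq n, hpseq1 n]
      simp only [star_mul, star_pow, star_sub, star_star, hps, hp1s]
      rw [mul_assoc (w ^ n) (p - p₁) ((p - p₁) * (star w) ^ n),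
        ← mul_assoc (p - p₁) (p - p₁) ((star w) ^ n), hq]
      noncomm_ring
    rw [hdiff]
    exact star_mul_self_nonneg _
  · intro n
    have hlamne : (lam : ℂ) ≠ 0 := by
      exact_mod_cast hlam0.ne'
    have hwx : ∀ x : A, φ (w * x) = (lam : ℂ) * φ (x * w) := by
      intro x
      rw [hspec x, ← mul_assoc, mul_inv_cancel₀ hlamne, one_mul]
    induction n with
    | zero => simp [hpseq 0]
    | succ k ih =>
      have hstep : pseq (k+1) = w * (pseq k * star w) := by
        rw [hpseq k, hpseq (k+1), pow_succ' w, pow_succ (star w)]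
        simp only [mul_assoc]
      rw [hstep, hwx, mul_assoc, hw, hpseqp k, ih, pow_succ]
      ring
end

section
/- Let A be a C*-algebra, h ∈ A with h ≥ 0 and ‖h‖ = 1, and b ∈ A with b ≥ 0 obtained as b = f(hₙ) where ‖h − hₙ‖ < ε < 1, ‖hₙ‖ = 1, and f : [0,1] → [0,1] is continuous monotone increasing with f(1−ε) = 0, f(1) = 1. If x ∈ A and q is a projection with ‖x* b x − q‖ < ε, then ‖x* b^{1/2} h b^{1/2} x − q‖ < ε(3 + 2ε); consequently, for ε small enough there is a projection in the hereditary subalgebra generated by h that is equivalent to q. -/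
/-!
Conjugating by `√b` turns `hₙ` into `hₙ b`, which lies between `(1 - ε) b` and `b` because `f`
vanishes below `1 - ε`; replacing `hₙ` by `h` costs at most `ε ‖x* b x‖ < ε (1 + ε)`, and the
first estimate is a triangle inequality.

For the projection, write `x* √b h √b x = c* c` with `c = √h √b x`. When `‖c* c - q‖ < 1`, the
element `u = 1 - q + q c* c q` commutes with `q` and is bounded below by a positive scalar, so
`w = c q u^{-1/2}` satisfies `w* w = q`. Then `w w*` is a projection equivalent to `q` of the form
`√h y √h`, which lies in the hereditary subalgebra of `h` because `√h` is the norm limit of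
`h √h (h + δ)⁻¹` as `δ → 0⁺`.
-/

open Set Filter Topology

lemma one_sub_mul_le_mul_of_monotoneOn {f : ℝ → ℝ} {ε t : ℝ}
    (hf_mono : MonotoneOn f (Icc 0 1)) (hf0 : f (1 - ε) = 0) (hε : 0 ≤ ε)
    (ht : t ∈ Icc 0 1) (hft : 0 ≤ f t) : (1 - ε) * f t ≤ t * f t := by
  rcases le_or_gt t (1 - ε) with hle | hlt
  · have : f t ≤ 0 := hf0 ▸ hf_mono ht ⟨ht.1.trans hle, by linarith⟩ hle
    simp [le_antisymm this hft]
  · exact mul_le_mul_of_nonneg_right hlt.le hft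

lemma abs_mul_sqrt_div_add_sub_sqrt_le {t δ : ℝ} (ht : 0 ≤ t) (hδ : 0 < δ) :
    |t * (√t / (t + δ)) - √t| ≤ √δ := by
  have hpos : 0 < t + δ := by positivity
  have hamgm : √t * √δ ≤ t + δ := by
    nlinarith [sq_nonneg (√t - √δ), Real.sq_sqrt ht, Real.sq_sqrt hδ.le]
  rw [show t * (√t / (t + δ)) - √t = -(√t * δ / (t + δ)) by field_simp; ring, abs_neg,
    abs_of_nonneg (by positivity), div_le_iff₀ hpos]
  calc √t * δ = √t * √δ * √δ := by rw [mul_assoc, Real.mul_self_sqrt hδ.le]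
    _ ≤ (t + δ) * √δ := by gcongr
    _ = √δ * (t + δ) := mul_comm _ _

section CStarRing

variable {E : Type*} [NonUnitalNormedRing E] [StarRing E] [CStarRing E]

lemma norm_star_mul_mul_le (a y : E) : ‖star y * a * y‖ ≤ ‖a‖ * ‖star y * y‖ :=
  calc ‖star y * a * y‖ ≤ ‖star y‖ * ‖a‖ * ‖y‖ := norm_mul₃_le
    _ = ‖a‖ * ‖star y * y‖ := by rw [CStarRing.norm_star_mul_self, norm_star]; ring

lemma mul_star_mul_self_of_isIdempotentElem {w : E} (hw : IsIdempotentElem (star w * w)) :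
    w * (star w * w) = w := by
  set p := star w * w
  have hp : star p = p := by simp [p]
  suffices star (w - w * p) * (w - w * p) = 0 from
    (sub_eq_zero.mp ((CStarRing.star_mul_self_eq_zero_iff _).mp this)).symm
  have hpp : p * p = p := hw.eq
  calc star (w - w * p) * (w - w * p) = p - p * p - p * p + p * p * p := by
        simp only [star_sub, star_mul, hp, sub_mul, mul_sub, p, mul_assoc]; abel
    _ = 0 := by simp only [hpp]; abel

lemma isStarProjection_mul_star_self_of_isIdempotentElem {w : E}
    (hw : IsIdempotentElem (star w * w)) :
    IsStarProjection (w * star w) where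
  isIdempotentElem := by
    rw [IsIdempotentElem, mul_assoc, ← mul_assoc (star w), ← mul_assoc,
      mul_star_mul_self_of_isIdempotentElem hw]
  isSelfAdjoint := .mul_star_self w

end CStarRing

section Unital

variable {A : Type*} [CStarAlgebra A]

lemma cfc_inv_sqrt_mul_self_mul_cfc_inv_sqrt {u : A} (hu : IsSelfAdjoint u)
    (hspec : ∀ t ∈ spectrum ℝ u, 0 < t) :
    cfc (fun t : ℝ => (√t)⁻¹) u * u * cfc (fun t : ℝ => (√t)⁻¹) u = 1 := by
  have hcont : ContinuousOn (fun t : ℝ => (√t)⁻¹) (spectrum ℝ u) :=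
    Real.continuous_sqrt.continuousOn.inv₀ fun t ht => (Real.sqrt_pos.mpr (hspec t ht)).ne'
  conv_lhs => enter [1, 2]; rw [← cfc_id' ℝ u]
  rw [← cfc_mul .., ← cfc_mul .., ← cfc_const_one ℝ u]
  refine cfc_congr fun t ht => ?_
  have := Real.sqrt_pos.mpr (hspec t ht)
  field_simp
  exact Real.sq_sqrt (hspec t ht).le |>.symm

end Unital

section Order

variable {A : Type*} [CStarAlgebra A] [PartialOrder A] [StarOrderedRing A]

lemma norm_le_mul_norm_of_nonneg_of_le_smul {a b : A} {r : ℝ} (hr : 0 ≤ r) (ha : 0 ≤ a)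
    (hab : a ≤ r • b) : ‖a‖ ≤ r * ‖b‖ := by
  simpa [norm_smul, abs_of_nonneg hr] using CStarAlgebra.norm_le_norm_of_nonneg_of_le ha hab

lemma spectrum_subset_Icc_of_nonneg_of_norm_le_one {a : A} (ha : 0 ≤ a) (hnorm : ‖a‖ ≤ 1) :
    spectrum ℝ a ⊆ Icc 0 1 := fun t ht =>
  ⟨spectrum_nonneg_of_nonneg ha ht,
    (le_algebraMap_iff_spectrum_le (r := (1 : ℝ)) ha.isSelfAdjoint).mp
      (by simpa using (CStarAlgebra.norm_le_one_iff_of_nonneg a).mp hnorm) t ht⟩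

lemma Commute.sqrt_mul_mul_sqrt {a b : A} (hab : Commute a b) (hb : 0 ≤ b) :
    CFC.sqrt b * a * CFC.sqrt b = a * b := by
  have hs : Commute (CFC.sqrt b) a := by
    rw [CFC.sqrt_eq_cfc]; exact hab.symm.cfc_nnreal _
  rw [hs.eq, mul_assoc, CFC.sqrt_mul_sqrt_self b]

lemma smul_cfc_le_sqrt_cfc_mul_mul_sqrt_cfc {a : A} (ha : 0 ≤ a) (hnorm : ‖a‖ ≤ 1) {ε : ℝ}
    (hε : 0 ≤ ε) {f : ℝ → ℝ} (hf_cont : Continuous f) (hf_mono : MonotoneOn f (Icc 0 1))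
    (hf_maps : MapsTo f (Icc 0 1) (Icc 0 1)) (hf0 : f (1 - ε) = 0) :
    (1 - ε) • cfc f a ≤ CFC.sqrt (cfc f a) * a * CFC.sqrt (cfc f a) ∧
      CFC.sqrt (cfc f a) * a * CFC.sqrt (cfc f a) ≤ cfc f a := by
  have hspec := spectrum_subset_Icc_of_nonneg_of_norm_le_one ha hnorm
  have hf_nonneg : ∀ t ∈ spectrum ℝ a, 0 ≤ f t := fun t ht => (hf_maps (hspec ht)).1
  have hconj : CFC.sqrt (cfc f a) * a * CFC.sqrt (cfc f a) = cfc (fun t => t * f t) a := by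
    rw [((Commute.refl a).cfc_real f).symm.sqrt_mul_mul_sqrt (cfc_nonneg hf_nonneg)]
    conv_lhs => enter [1]; rw [← cfc_id' ℝ a]
    exact (cfc_mul ..).symm
  rw [hconj, ← cfc_smul ..]
  exact ⟨cfc_mono fun t ht => one_sub_mul_le_mul_of_monotoneOn hf_mono hf0 hε (hspec ht)
      (hf_nonneg t ht),
    cfc_mono fun t ht => mul_le_of_le_one_left (hf_nonneg t ht) (hspec ht).2⟩

lemma norm_star_mul_conj_sub_lt {ε : ℝ} {h hn b s x q : A} (hs : IsSelfAdjoint s)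
    (hss : s * s = b) (hlow : (1 - ε) • b ≤ s * hn * s) (hup : s * hn * s ≤ b)
    (hclose : ‖h - hn‖ ≤ ε) (hq : ‖q‖ ≤ 1) (hxq : ‖star x * b * x - q‖ < ε) :
    ‖star x * (s * h * s) * x - q‖ < ε * (3 + 2 * ε) := by
  have hε : 0 ≤ ε := (norm_nonneg _).trans hclose
  set B := star x * b * x
  have hB : ‖B‖ < 1 + ε := by linarith [norm_sub_norm_le B q]
  have hh : ‖star x * (s * h * s) * x - star x * (s * hn * s) * x‖ ≤ ε * ‖B‖ := by
    have hconj : star (s * x) * (s * x) = B := by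
      simp only [B, star_mul, hs.star_eq, ← hss, mul_assoc]
    calc _ = ‖star (s * x) * (h - hn) * (s * x)‖ := by
          simp only [star_mul, hs.star_eq, mul_sub, sub_mul, mul_assoc]
      _ ≤ ‖h - hn‖ * ‖B‖ := hconj ▸ norm_star_mul_mul_le _ _
      _ ≤ ε * ‖B‖ := by gcongr
  have hb : ‖B - star x * (s * hn * s) * x‖ ≤ ε * ‖B‖ := by
    have hsub : b - s * hn * s ≤ ε • b := by
      calc b - s * hn * s ≤ b - (1 - ε) • b := sub_le_sub_left hlow b
        _ = ε • b := by module
    refine norm_le_mul_norm_of_nonneg_of_le_smul hε ?_ ?_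
    · simpa [mul_sub, sub_mul] using star_left_conjugate_nonneg (sub_nonneg.mpr hup) x
    · simpa [mul_sub, sub_mul, mul_smul_comm, smul_mul_assoc] using
        star_left_conjugate_le_conjugate hsub x
  calc ‖star x * (s * h * s) * x - q‖
      = ‖(star x * (s * h * s) * x - star x * (s * hn * s) * x)
          - (B - star x * (s * hn * s) * x) + (B - q)‖ := by congr 1; abel
    _ ≤ ‖star x * (s * h * s) * x - star x * (s * hn * s) * x‖
          + ‖B - star x * (s * hn * s) * x‖ + ‖B - q‖ :=
        (norm_add_le _ _).trans (by gcongr; exact norm_sub_le _ _)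
    _ < ε * (3 + 2 * ε) := by nlinarith [mul_le_mul_of_nonneg_left hB.le hε]

lemma IsStarProjection.algebraMap_le_one_sub_add_mul_mul {q a : A} (hq : IsStarProjection q)
    (ha : IsSelfAdjoint a) {γ : ℝ} (hγ : ‖a - q‖ ≤ γ) :
    algebraMap ℝ A (1 - γ) ≤ 1 - q + q * a * q := by
  have hlow : -(γ • 1) ≤ a - q := by
    refine le_trans ?_ (ha.sub hq.isSelfAdjoint).neg_algebraMap_norm_le_self
    rw [Algebra.algebraMap_eq_smul_one, neg_le_neg_iff]
    exact smul_le_smul_of_nonneg_right hγ zero_le_one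
  have hconj : -(γ • q) ≤ q * a * q - q := by
    simpa [hq.isSelfAdjoint.star_eq, mul_sub, sub_mul, hq.isIdempotentElem.eq]
      using star_left_conjugate_le_conjugate hlow q
  have hcompl : 0 ≤ γ • (1 - q) := smul_nonneg ((norm_nonneg _).trans hγ) hq.one_sub_nonneg
  calc algebraMap ℝ A (1 - γ) = 1 - q + -(γ • q) - γ • (1 - q) + q := by
        rw [Algebra.algebraMap_eq_smul_one]; module
    _ ≤ 1 - q + (q * a * q - q) - 0 + q := by gcongr
    _ = 1 - q + q * a * q := by abel

lemma IsStarProjection.exists_star_mul_self_eq {q : A} (hq : IsStarProjection q) (c : A)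
    (hc : ‖star c * c - q‖ < 1) : ∃ t, star (c * t) * (c * t) = q := by
  set u := 1 - q + q * (star c * c) * q
  have hu : IsSelfAdjoint u :=
    ((IsSelfAdjoint.one A).sub hq.isSelfAdjoint).add
      ((IsSelfAdjoint.star_mul_self c).conjugate_self hq.isSelfAdjoint)
  have hspec : ∀ t ∈ spectrum ℝ u, 0 < t := fun t ht =>
    (sub_pos.mpr hc).trans_le <| (algebraMap_le_iff_le_spectrum hu).mp
      (hq.algebraMap_le_one_sub_add_mul_mul (.star_mul_self c) le_rfl) t ht
  have huq : u * q = q * (star c * c) * q := by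
    simp only [u, add_mul, sub_mul, one_mul, mul_assoc, hq.isIdempotentElem.eq]; abel
  have hqu : q * u = q * (star c * c) * q := by
    simp only [u, mul_add, mul_sub, mul_one, ← mul_assoc, hq.isIdempotentElem.eq]; abel
  set v := cfc (fun t : ℝ => (√t)⁻¹) u
  have hvq : Commute v q := Commute.cfc_real (huq.trans hqu.symm) _
  have hv : IsSelfAdjoint v := cfc_predicate _ u
  refine ⟨q * v, ?_⟩
  calc star (c * (q * v)) * (c * (q * v)) = v * (u * q) * v := by
        rw [huq, star_mul, star_mul, hq.isSelfAdjoint.star_eq, hv.star_eq]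
        simp only [mul_assoc]
    _ = v * u * v * q := by simp only [mul_assoc, ← hvq.eq]
    _ = q := by rw [cfc_inv_sqrt_mul_self_mul_cfc_inv_sqrt hu hspec, one_mul]

lemma norm_mul_cfc_sqrt_div_add_sub_sqrt_le {a : A} (ha : 0 ≤ a) {δ : ℝ} (hδ : 0 < δ) :
    ‖a * cfc (fun t : ℝ => √t / (t + δ)) a - CFC.sqrt a‖ ≤ √δ := by
  have hspec := spectrum_nonneg_of_nonneg (𝕜 := ℝ) ha
  have hcont : ContinuousOn (fun t : ℝ => √t / (t + δ)) (spectrum ℝ a) :=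
    Real.continuous_sqrt.continuousOn.div (by fun_prop) fun t ht => by
      have := hspec ht; positivity
  rw [CFC.sqrt_eq_real_sqrt a, cfcₙ_eq_cfc (hf0 := Real.sqrt_zero)]
  conv_lhs => enter [1, 1, 1]; rw [← cfc_id' ℝ a]
  rw [← cfc_mul .., ← cfc_sub ..]
  exact norm_cfc_le (Real.sqrt_nonneg δ) fun t ht =>
    abs_mul_sqrt_div_add_sub_sqrt_le (hspec ht) hδ

lemma tendsto_mul_cfc_sqrt_div_add {a : A} (ha : 0 ≤ a) :
    Tendsto (fun δ : ℝ => a * cfc (fun t : ℝ => √t / (t + δ)) a) (𝓝[>] 0) (𝓝 (CFC.sqrt a)) := by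
  rw [tendsto_iff_norm_sub_tendsto_zero]
  have hsqrt : Tendsto (fun δ : ℝ => √δ) (𝓝[>] 0) (𝓝 0) := by
    simpa using (Real.continuous_sqrt.tendsto 0).mono_left nhdsWithin_le_nhds
  exact squeeze_zero' (.of_forall fun _ => norm_nonneg _)
    (eventually_nhdsWithin_of_forall fun _ hδ => norm_mul_cfc_sqrt_div_add_sub_sqrt_le ha hδ)
    hsqrt

lemma CFC.sqrt_mul_mul_sqrt_mem_closure {a : A} (ha : 0 ≤ a) (y : A) :
    CFC.sqrt a * y * CFC.sqrt a ∈ closure {z : A | ∃ w : A, z = a * w * a} := by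
  refine mem_closure_of_tendsto (((tendsto_mul_cfc_sqrt_div_add ha).mul tendsto_const_nhds).mul
    (tendsto_mul_cfc_sqrt_div_add ha)) (.of_forall fun δ => ?_)
  set g := cfc (fun t : ℝ => √t / (t + δ)) a
  refine ⟨g * y * g, ?_⟩
  have hg : Commute g a := (Commute.refl a).cfc_real _
  simp only [mul_assoc, hg.eq]

end Order

theorem projection_in_hereditary_subalgebra_general
    {A : Type*} [CStarAlgebra A] [PartialOrder A] [StarOrderedRing A]
    (ε : ℝ)
    (h hn : A) (hh_pos : 0 ≤ h)
    (hhn_pos : 0 ≤ hn) (hhn_norm : ‖hn‖ = 1)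
    (hclose : ‖h - hn‖ < ε)
    (f : ℝ → ℝ) (hf_cont : Continuous f)
    (hf_mono : MonotoneOn f (Set.Icc 0 1))
    (hf_maps : Set.MapsTo f (Set.Icc 0 1) (Set.Icc 0 1))
    (hf0 : f (1 - ε) = 0)
    (b : A) (hb : b = cfc f hn) :
    (∀ x q : A, IsIdempotentElem q → star q = q → ‖star x * b * x - q‖ < ε →
        ‖star x * (CFC.sqrt b * h * CFC.sqrt b) * x - q‖ < ε * (3 + 2 * ε)) ∧
    (ε * (3 + 2 * ε) < 1 →
      ∀ x q : A, IsIdempotentElem q → star q = q → ‖star x * b * x - q‖ < ε →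
        ∃ e s : A, IsIdempotentElem e ∧ star e = e ∧
          e ∈ closure {z : A | ∃ y : A, z = h * y * h} ∧
          star s * s = e ∧ s * star s = q) := by
  have hb_nonneg : 0 ≤ b := hb ▸ cfc_nonneg fun t ht =>
    (hf_maps (spectrum_subset_Icc_of_nonneg_of_norm_le_one hhn_pos hhn_norm.le ht)).1
  obtain ⟨hlow, hup⟩ := hb ▸ smul_cfc_le_sqrt_cfc_mul_mul_sqrt_cfc hhn_pos hhn_norm.le
    ((norm_nonneg _).trans hclose.le) hf_cont hf_mono hf_maps hf0
  have hperturb := fun x q (hq : IsIdempotentElem q) (hqs : star q = q) =>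
    norm_star_mul_conj_sub_lt (x := x) (CFC.sqrt_nonneg b).isSelfAdjoint
      (CFC.sqrt_mul_sqrt_self b) hlow hup hclose.le (IsStarProjection.norm_le q ⟨hq, hqs⟩)
  refine ⟨hperturb, fun hsmall x q hq hqs hxq => ?_⟩
  set c := CFC.sqrt h * (CFC.sqrt b * x)
  have hc : star c * c = star x * (CFC.sqrt b * h * CFC.sqrt b) * x := by
    simp only [c, star_mul, (CFC.sqrt_nonneg h).isSelfAdjoint.star_eq,
      (CFC.sqrt_nonneg b).isSelfAdjoint.star_eq, mul_assoc]
    rw [← mul_assoc (CFC.sqrt h) (CFC.sqrt h), CFC.sqrt_mul_sqrt_self h]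
  obtain ⟨t, ht⟩ := IsStarProjection.exists_star_mul_self_eq ⟨hq, hqs⟩ c
    (hc ▸ (hperturb x q hq hqs hxq).trans hsmall)
  have he := isStarProjection_mul_star_self_of_isIdempotentElem (ht ▸ hq)
  refine ⟨c * t * star (c * t), star (c * t), he.isIdempotentElem, he.isSelfAdjoint, ?_,
    by rw [star_star], by rw [star_star, ht]⟩
  convert CFC.sqrt_mul_mul_sqrt_mem_closure hh_pos
    (CFC.sqrt b * x * t * star t * star x * CFC.sqrt b) using 1
  simp only [c, star_mul, (CFC.sqrt_nonneg h).isSelfAdjoint.star_eq,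
    (CFC.sqrt_nonneg b).isSelfAdjoint.star_eq, mul_assoc]

/-- from the proof of Claim 3.6: with `h, hₙ ≥ 0` of norm one,
`‖h − hₙ‖ < ε < 1`, and `b = f(hₙ)` for `f : [0,1] → [0,1]` continuous monotone with
`f(1−ε) = 0`, `f(1) = 1`: if `q` is a projection with `‖x* b x − q‖ < ε` then
`‖x* b^{1/2} h b^{1/2} x − q‖ < ε(3+2ε)`; and if `ε` is small enough (so that
`ε(3+2ε) < 1`) then there is a projection in the hereditary subalgebra generated by
`h` which is Murray–von Neumann equivalent to `q`. -/
theorem projection_in_hereditary_subalgebra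
    {A : Type*} [CStarAlgebra A] [PartialOrder A] [StarOrderedRing A]
    (ε : ℝ) (hε0 : 0 < ε) (hε1 : ε < 1)
    (h hn : A) (hh_pos : 0 ≤ h) (hh_norm : ‖h‖ = 1)
    (hhn_pos : 0 ≤ hn) (hhn_norm : ‖hn‖ = 1)
    (hclose : ‖h - hn‖ < ε)
    (f : ℝ → ℝ) (hf_cont : Continuous f)
    (hf_mono : MonotoneOn f (Set.Icc 0 1))
    (hf_maps : Set.MapsTo f (Set.Icc 0 1) (Set.Icc 0 1))
    (hf0 : f (1 - ε) = 0) (hf1 : f 1 = 1)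
    (b : A) (hb : b = cfc f hn) :
    (∀ x q : A, IsIdempotentElem q → star q = q → ‖star x * b * x - q‖ < ε →
        ‖star x * (CFC.sqrt b * h * CFC.sqrt b) * x - q‖ < ε * (3 + 2 * ε)) ∧
    (ε * (3 + 2 * ε) < 1 →
      ∀ x q : A, IsIdempotentElem q → star q = q → ‖star x * b * x - q‖ < ε →
        ∃ e s : A, IsIdempotentElem e ∧ star e = e ∧
          e ∈ closure {z : A | ∃ y : A, z = h * y * h} ∧
          star s * s = e ∧ s * star s = q) :=
  projection_in_hereditary_subalgebra_general ε h hn hh_pos hhn_pos hhn_norm hclose f hf_cont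
    hf_mono hf_maps hf0 b hb
end

section
/- Let A be a C*-algebra and p a full projection in A. If pAp is simple and purely infinite, then A is simple and purely infinite. -/
variable {A : Type*} [NonUnitalCStarAlgebra A] [PartialOrder A] [StarOrderedRing A]

/-- `J` is an ideal of the subalgebra of `A` whose carrier is the set `S`. -/
def IsIdealIn (S J : Set A) : Prop :=
  J ⊆ S ∧ (0 : A) ∈ J ∧ (∀ x ∈ J, ∀ y ∈ J, x + y ∈ J) ∧
    (∀ (c : ℂ), ∀ x ∈ J, c • x ∈ J) ∧
    (∀ x ∈ J, ∀ s ∈ S, s * x ∈ J ∧ x * s ∈ J)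

/-- The C*-algebra with carrier set `S ⊆ A` is simple. -/
def SimpleOn (S : Set A) : Prop :=
  ∀ J : Set A, IsIdealIn S J → IsClosed J → J = {0} ∨ J = S

/-- The C*-algebra with carrier set `S ⊆ A` is purely infinite: each of its nonzero
hereditary C*-subalgebras contains an infinite projection, i.e. a projection `e` which
is Murray–von Neumann equivalent (via `s ∈ S`) to a proper subprojection of itself. -/
def PurelyInfiniteOn (S : Set A) : Prop :=
  ∀ h ∈ S, 0 ≤ h → h ≠ 0 →
    ∃ e s : A, e ∈ S ∧ s ∈ S ∧ IsIdempotentElem e ∧ star e = e ∧ e ≠ 0 ∧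
      e ∈ closure {z : A | ∃ y ∈ S, z = h * y * h} ∧
      star s * s = e ∧ e * (s * star s) = s * star s ∧ s * star s ≠ e

/-- The corner `pAp` as a subset of `A`. -/
def CornerSet (p : A) : Set A := {x : A | x = p * x * p}


/-!
For a closed ideal `J` of `A`, `J ∩ pAp` is a closed ideal of `pAp`. If it is `pAp`, then `p ∈ J`
and `J = A` by fullness. If it is `0`, then `pJ = 0`, so the left annihilator of `J` is a closed
ideal containing `p`, hence everything, and `J* J = 0`.

Given `h ≥ 0` nonzero, fullness gives `c` with `w = p c h ≠ 0`, so `w w*` is a nonzero positive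
element of `pAp` and its hereditary subalgebra contains an infinite projection `e`. With
`gₙ = fₙ(w w*)`, `fₙ(t) = √t / (t + 1/n)`, the products `gₙ (w w*) gₘ` form an approximate unit of
`(w w*) A`, so `w* gₙ e` converges to some `v` with `v* v = e` and `v v* ∈ closure (h A h)`.
Conjugation by `v` carries a non-unitary isometry of `eAe` to one of `(v v*) A (v v*)`.
-/

open Filter Topology

section Order

variable {α β : Type*} [Preorder α] [Preorder β]

lemma tendsto_fst_atTop [Nonempty β] : Tendsto (Prod.fst : α × β → α) atTop atTop := by
  rw [← prod_atTop_atTop_eq]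
  exact tendsto_fst

lemma tendsto_snd_atTop [Nonempty α] : Tendsto (Prod.snd : α × β → β) atTop atTop := by
  rw [← prod_atTop_atTop_eq]
  exact tendsto_snd

end Order

section NormedRing

variable {R : Type*} [NonUnitalNormedRing R]

lemma tendsto_mul_of_mem_closure_range_mul {ι : Type*} {l : Filter ι} {u : ι → R} {a b : R}
    (hu : ∀ i, ‖u i‖ ≤ 1) (ha : Tendsto (fun i => u i * a) l (𝓝 a))
    (hb : b ∈ closure (Set.range (a * ·))) : Tendsto (fun i => u i * b) l (𝓝 b) := by
  rw [Metric.tendsto_nhds]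
  intro η hη
  obtain ⟨_, ⟨y, rfl⟩, hby⟩ := Metric.mem_closure_iff.mp hb (η / 3) (by positivity)
  have hlim : Tendsto (fun i => (u i * a - a) * y) l (𝓝 0) := by
    simpa using ((ha.sub_const a).mul_const y)
  filter_upwards [Metric.tendsto_nhds.mp hlim (η / 3) (by positivity)] with i hi
  rw [dist_zero_right] at hi
  rw [dist_eq_norm] at hby
  have hsplit : u i * b - b = u i * (b - a * y) + (u i * a - a) * y + (a * y - b) := by
    noncomm_ring
  have hu' : ‖u i * (b - a * y)‖ ≤ ‖b - a * y‖ :=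
    (norm_mul_le _ _).trans (mul_le_of_le_one_left (norm_nonneg _) (hu i))
  rw [dist_eq_norm, hsplit]
  calc _ ≤ ‖u i * (b - a * y)‖ + ‖(u i * a - a) * y‖ + ‖a * y - b‖ := norm_add₃_le
    _ < η / 3 + η / 3 + η / 3 := by rw [norm_sub_rev (a * y)]; gcongr; linarith
    _ = η := by ring

end NormedRing

section CStarRing

variable {R : Type*} [NonUnitalNormedRing R] [StarRing R] [CStarRing R]

lemma exists_tendsto_star_mul_self_eq [CompleteSpace R] {x : ℕ → R} {e : R}
    (h : Tendsto (fun n : ℕ × ℕ => star (x n.1) * x n.2) atTop (𝓝 e)) :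
    ∃ v, Tendsto x atTop (𝓝 v) ∧ star v * v = e := by
  have hdiag (f : ℕ × ℕ → ℕ) (g : ℕ × ℕ → ℕ) (hf : Tendsto f atTop atTop)
      (hg : Tendsto g atTop atTop) :
      Tendsto (fun n => star (x (f n)) * x (g n)) atTop (𝓝 e) :=
    h.comp (by rw [← prod_atTop_atTop_eq]; exact hf.prodMk hg)
  have hfst := tendsto_fst_atTop (α := ℕ) (β := ℕ)
  have hsnd := tendsto_snd_atTop (α := ℕ) (β := ℕ)
  have hcauchy : CauchySeq x := by
    rw [cauchySeq_iff_tendsto_dist_atTop_0]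
    have hsq : Tendsto (fun n : ℕ × ℕ => star (x n.1 - x n.2) * (x n.1 - x n.2)) atTop
        (𝓝 0) := by
      have := (((hdiag _ _ hfst hfst).sub (hdiag _ _ hfst hsnd)).sub
        (hdiag _ _ hsnd hfst)).add (hdiag _ _ hsnd hsnd)
      simp only [sub_self, zero_sub, neg_add_cancel] at this
      convert this using 2
      simp only [star_sub, sub_mul, mul_sub]
      abel
    have := (Real.continuous_sqrt.tendsto 0).comp (norm_zero (E := R) ▸ hsq.norm)
    rw [Real.sqrt_zero] at this
    convert this using 2 with n
    rw [Function.comp_apply, CStarRing.norm_star_mul_self, Real.sqrt_mul_self (norm_nonneg _),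
      dist_eq_norm]
  obtain ⟨v, hv⟩ := cauchySeq_tendsto_of_complete hcauchy
  refine ⟨v, hv, tendsto_nhds_unique (hv.star.mul hv) ?_⟩
  exact h.comp tendsto_atTop_diagonal

lemma IsSelfAdjoint.eq_zero_of_mul_mul_self_eq_zero {x : R} (hx : IsSelfAdjoint x)
    (h : x * (x * x) = 0) : x = 0 := by
  have hxx : x * x = 0 := (CStarRing.star_mul_self_eq_zero_iff _).mp (by
    rw [star_mul, hx.star_eq, mul_assoc, h, mul_zero])
  exact (CStarRing.star_mul_self_eq_zero_iff _).mp (by rw [hx.star_eq, hxx])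

lemma mul_eq_self_of_star_mul_self_mul_eq {x p : R} (hp : IsSelfAdjoint p)
    (h : star x * x * p = star x * x) : x * p = x := by
  have h' : p * (star x * x) = star x * x := by
    simpa [mul_assoc, hp.star_eq] using congrArg star h
  have hzero : star (x * p - x) * (x * p - x) = 0 := by
    have : star (x * p - x) * (x * p - x)
        = p * (star x * x * p) - p * (star x * x) - star x * x * p + star x * x := by
      rw [star_sub, star_mul, hp.star_eq]
      noncomm_ring
    rw [this, h, h']
    abel
  exact sub_eq_zero.mp ((CStarRing.star_mul_self_eq_zero_iff _).mp hzero)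

lemma mul_eq_self_of_star_mul_self_eq {x e : R} (he : IsStarProjection e)
    (h : star x * x = e) : x * e = x :=
  mul_eq_self_of_star_mul_self_mul_eq he.isSelfAdjoint (by rw [h, he.isIdempotentElem.eq])

lemma mul_eq_self_of_mul_mul_star_self_eq {x e : R} (he : IsStarProjection e)
    (h : e * (x * star x) = x * star x) : e * x = x := by
  have h' : star x * e = star x := mul_eq_self_of_star_mul_self_mul_eq he.isSelfAdjoint (by
    simpa [mul_assoc, he.isSelfAdjoint.star_eq] using congrArg star h)
  simpa [he.isSelfAdjoint.star_eq] using congrArg star h'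

lemma IsStarProjection.mul_star_self_of_star_mul_self_eq {v e : R} (he : IsStarProjection e)
    (hv : star v * v = e) : IsStarProjection (v * star v) := by
  refine ⟨?_, .mul_star_self v⟩
  rw [IsIdempotentElem, mul_assoc, ← mul_assoc (star v), hv, ← star_star (e * star v), star_mul,
    star_star, he.isSelfAdjoint.star_eq, mul_eq_self_of_star_mul_self_eq he hv]

/-- `s` is a non-unitary isometry of the corner `eRe`, so `e` is an infinite projection. -/
def IsNonUnitaryIsometryIn (e s : R) : Prop :=
  star s * s = e ∧ e * (s * star s) = s * star s ∧ s * star s ≠ e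

lemma IsNonUnitaryIsometryIn.conj {e s v : R} (h : IsNonUnitaryIsometryIn e s)
    (he : IsStarProjection e) (hv : star v * v = e) :
    IsNonUnitaryIsometryIn (v * star v) (v * s * star v) := by
  obtain ⟨hs, hss, hne⟩ := h
  have hve : v * e = v := mul_eq_self_of_star_mul_self_eq he hv
  have hse : s * e = s := mul_eq_self_of_star_mul_self_eq he hs
  have hes : e * s = s := mul_eq_self_of_mul_mul_star_self_eq he hss
  have hev : e * star v = star v := by
    simpa [he.isSelfAdjoint.star_eq] using congrArg star hve
  have hes' : star s * e = star s := by
    simpa [he.isSelfAdjoint.star_eq] using congrArg star hes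
  have assoc {a b c : R} (h : a * b = c) (x : R) : a * (b * x) = c * x := by rw [← mul_assoc, h]
  have hrange : v * s * star v * star (v * s * star v) = v * (s * star s) * star v := by
    simp only [star_mul, star_star, mul_assoc, assoc hv, assoc hse]
  refine ⟨?_, ?_, fun hEq => hne ?_⟩
  · simp only [star_mul, star_star, mul_assoc, assoc hv, assoc hes, assoc hs, hev]
  · simp only [mul_assoc, assoc hv, assoc hes]
  · have := congrArg (fun x => star v * x * v) (hrange.symm.trans hEq)
    simpa only [mul_assoc, assoc hv, assoc hes, hv, hes', he.isIdempotentElem.eq] using this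

end CStarRing

section TopologicalRing

variable {R : Type*} [NonUnitalRing R] [TopologicalSpace R] [ContinuousMul R] [T1Space R]

/-- The left annihilator of `S` is a closed ideal containing `p`. -/
lemma mul_eq_zero_of_full {p : R}
    (hfull : ∀ I : TwoSidedIdeal R, IsClosed (I : Set R) → p ∈ I → I = ⊤) {S : Set R}
    (hS : ∀ a, ∀ x ∈ S, a * x ∈ S) (hp : ∀ x ∈ S, p * x = 0) (y : R) {x : R} (hx : x ∈ S) :
    y * x = 0 := by
  let L : TwoSidedIdeal R := .mk' {y | ∀ x ∈ S, y * x = 0}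
    (fun x _ => zero_mul x)
    (fun hy hz x hx => by rw [add_mul, hy x hx, hz x hx, add_zero])
    (fun hy x hx => by rw [neg_mul, hy x hx, neg_zero])
    (fun hy x hx => by rw [mul_assoc, hy x hx, mul_zero])
    (fun hy x hx => by rw [mul_assoc]; exact hy _ (hS _ x hx))
  have hL : IsClosed (L : Set R) := by
    have : (L : Set R) = ⋂ x ∈ S, {y | y * x = 0} := by ext; simp [L]
    rw [this]
    exact isClosed_biInter fun x _ => isClosed_singleton.preimage (continuous_mul_const x)
  have hy : y ∈ L := by rw [hfull L hL ((TwoSidedIdeal.mem_mk' ..).mpr hp)]; trivial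
  exact (TwoSidedIdeal.mem_mk' ..).mp hy x hx

end TopologicalRing

section Corner

variable {B : Type*} [NonUnitalCStarAlgebra B] {p : B}

lemma mem_cornerSet_iff (hp : IsIdempotentElem p) {x : B} :
    x ∈ CornerSet p ↔ p * x = x ∧ x * p = x := by
  refine ⟨fun hx => ⟨?_, ?_⟩, fun ⟨hl, hr⟩ => by rw [CornerSet, Set.mem_ofPred_eq, hl, hr]⟩
  · rw [hx, ← mul_assoc, ← mul_assoc, hp.eq]
  · rw [hx, mul_assoc, hp.eq]

lemma mul_mul_mem_cornerSet (hp : IsIdempotentElem p) (x : B) : p * x * p ∈ CornerSet p :=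
  (mem_cornerSet_iff hp).mpr
    ⟨by rw [← mul_assoc, ← mul_assoc, hp.eq], by rw [mul_assoc, hp.eq]⟩

lemma isClosed_cornerSet (p : B) : IsClosed (CornerSet p) :=
  isClosed_eq continuous_id (by fun_prop)

lemma IsIdealIn.inter_cornerSet {J : Set B} (hJ : IsIdealIn Set.univ J)
    (hp : IsIdempotentElem p) : IsIdealIn (CornerSet p) (J ∩ CornerSet p) := by
  obtain ⟨-, hJ0, hJadd, hJsmul, hJmul⟩ := hJ
  simp only [IsIdealIn, Set.mem_inter_iff, mem_cornerSet_iff hp] at *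
  refine ⟨Set.inter_subset_right, ⟨hJ0, by simp⟩, ?_, ?_, ?_⟩
  · rintro x ⟨hxJ, hxl, hxr⟩ y ⟨hyJ, hyl, hyr⟩
    exact ⟨hJadd x hxJ y hyJ, by rw [mul_add, hxl, hyl], by rw [add_mul, hxr, hyr]⟩
  · rintro c x ⟨hxJ, hxl, hxr⟩
    exact ⟨hJsmul c x hxJ, by rw [mul_smul_comm, hxl], by rw [smul_mul_assoc, hxr]⟩
  · rintro x ⟨hxJ, hxl, hxr⟩ s ⟨hsl, hsr⟩
    exact ⟨⟨(hJmul x hxJ s trivial).1, by rw [← mul_assoc, hsl], by rw [mul_assoc, hxr]⟩,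
      ⟨(hJmul x hxJ s trivial).2, by rw [← mul_assoc, hxl], by rw [mul_assoc, hsr]⟩⟩

end Corner

section Simple

variable {B : Type*} [NonUnitalCStarAlgebra B] {p : B}

lemma IsIdealIn.eq_univ_of_full {J : Set B} (hJ : IsIdealIn Set.univ J) (hJcl : IsClosed J)
    (hfull : ∀ I : TwoSidedIdeal B, IsClosed (I : Set B) → p ∈ I → I = ⊤) (hpJ : p ∈ J) :
    J = Set.univ := by
  obtain ⟨-, hJ0, hJadd, hJsmul, hJmul⟩ := hJ
  let I : TwoSidedIdeal B := .mk' J hJ0 (hJadd _ · _ ·)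
    (fun hx => by simpa using hJsmul (-1) _ hx)
    (fun hy => (hJmul _ hy _ trivial).1) (fun hx => (hJmul _ hx _ trivial).2)
  have hI : (I : Set B) = J := TwoSidedIdeal.coe_mk' ..
  rw [← hI, hfull I (by rwa [hI]) ((TwoSidedIdeal.mem_mk' ..).mpr hpJ), TwoSidedIdeal.coe_top]

theorem simpleOn_univ_of_full (hp : IsStarProjection p)
    (hfull : ∀ I : TwoSidedIdeal B, IsClosed (I : Set B) → p ∈ I → I = ⊤)
    (hsimple : SimpleOn (CornerSet p)) : SimpleOn (Set.univ : Set B) := by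
  intro J hJ hJcl
  have hJmul : ∀ a, ∀ x ∈ J, a * x ∈ J := fun a x hx => (hJ.2.2.2.2 x hx a trivial).1
  have hJmul' : ∀ x ∈ J, ∀ a, x * a ∈ J := fun x hx a => (hJ.2.2.2.2 x hx a trivial).2
  rcases hsimple _ (hJ.inter_cornerSet hp.isIdempotentElem)
    (hJcl.inter (isClosed_cornerSet p)) with h0 | hC
  · have hpJ : ∀ x ∈ J, p * x = 0 := fun x hx => by
      have hmem : p * (x * star x) * p ∈ J ∩ CornerSet p :=
        ⟨hJmul' _ (hJmul p _ (hJmul' x hx _)) p,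
          mul_mul_mem_cornerSet hp.isIdempotentElem _⟩
      refine (CStarRing.mul_star_self_eq_zero_iff _).mp ?_
      rw [h0, Set.mem_singleton_iff] at hmem
      rw [star_mul, hp.isSelfAdjoint.star_eq]
      simpa only [mul_assoc] using hmem
    refine .inl (Set.eq_singleton_iff_unique_mem.mpr ⟨hJ.2.1, fun x hx => ?_⟩)
    exact (CStarRing.star_mul_self_eq_zero_iff x).mp (mul_eq_zero_of_full hfull hJmul hpJ _ hx)
  · have hpJ : p ∈ J ∩ CornerSet p := by
      rw [hC, mem_cornerSet_iff hp.isIdempotentElem]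
      exact ⟨hp.isIdempotentElem, hp.isIdempotentElem⟩
    exact .inr (hJ.eq_univ_of_full hJcl hfull hpJ.1)

end Simple

/-- The absolute value keeps the denominator positive, so the function is continuous on `ℝ`. -/
noncomputable def sqrtDivAbsAdd (ε t : ℝ) : ℝ := √t / (|t| + ε)

@[fun_prop]
lemma continuous_sqrtDivAbsAdd {ε : ℝ} (hε : 0 < ε) : Continuous (sqrtDivAbsAdd ε) :=
  Real.continuous_sqrt.div (continuous_abs.add continuous_const) fun t => by positivity

@[simp]
lemma sqrtDivAbsAdd_zero (ε : ℝ) : sqrtDivAbsAdd ε 0 = 0 := by simp [sqrtDivAbsAdd]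

lemma sqrtDivAbsAdd_mul_mul {ε δ t : ℝ} (ht : 0 ≤ t) :
    sqrtDivAbsAdd ε t * t * sqrtDivAbsAdd δ t = t ^ 2 / ((t + ε) * (t + δ)) := by
  have := Real.sq_sqrt ht
  simp only [sqrtDivAbsAdd, abs_of_nonneg ht]
  field_simp
  rw [this]
  ring

lemma norm_sqrtDivAbsAdd_mul_mul_le_one {ε δ t : ℝ} (hε : 0 < ε) (hδ : 0 < δ) (ht : 0 ≤ t) :
    ‖sqrtDivAbsAdd ε t * t * sqrtDivAbsAdd δ t‖ ≤ 1 := by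
  rw [sqrtDivAbsAdd_mul_mul ht, Real.norm_of_nonneg (by positivity), div_le_one (by positivity)]
  nlinarith

lemma norm_sqrtDivAbsAdd_mul_mul_mul_sub_le {ε δ t : ℝ} (hε : 0 < ε) (hδ : 0 < δ) (ht : 0 ≤ t) :
    ‖sqrtDivAbsAdd ε t * t * sqrtDivAbsAdd δ t * t - t‖ ≤ 2 * (ε + δ) := by
  have hD : 0 < (t + ε) * (t + δ) := by positivity
  have key : t - t ^ 2 / ((t + ε) * (t + δ)) * t
      = t * ((ε + δ) * t + ε * δ) / ((t + ε) * (t + δ)) := by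
    field_simp
    ring
  rw [sqrtDivAbsAdd_mul_mul ht, norm_sub_rev, key, Real.norm_of_nonneg (by positivity),
    div_le_iff₀ hD]
  nlinarith [mul_nonneg ht (mul_nonneg hε.le hδ.le), mul_nonneg (mul_nonneg ht ht) hε.le,
    mul_nonneg (mul_nonneg ht ht) hδ.le, mul_nonneg (mul_nonneg hε.le hδ.le) hδ.le,
    mul_nonneg (mul_nonneg hε.le hδ.le) hε.le, mul_nonneg ht (mul_nonneg hε.le hε.le),
    mul_nonneg ht (mul_nonneg hδ.le hδ.le)]

section CFC

variable {a : A}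

lemma cfcₙ_sqrtDivAbsAdd_mul_mul (ha : 0 ≤ a) {ε δ : ℝ} (hε : 0 < ε) (hδ : 0 < δ) :
    cfcₙ (sqrtDivAbsAdd ε) a * a * cfcₙ (sqrtDivAbsAdd δ) a
      = cfcₙ (fun t => sqrtDivAbsAdd ε t * t * sqrtDivAbsAdd δ t) a := by
  have : IsSelfAdjoint a := .of_nonneg ha
  rw [cfcₙ_mul (fun t => sqrtDivAbsAdd ε t * t) (sqrtDivAbsAdd δ),
    cfcₙ_mul (sqrtDivAbsAdd ε) (fun t => t), cfcₙ_id' ℝ a]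

lemma norm_cfcₙ_sqrtDivAbsAdd_mul_mul_le_one (ha : 0 ≤ a) {ε δ : ℝ} (hε : 0 < ε) (hδ : 0 < δ) :
    ‖cfcₙ (sqrtDivAbsAdd ε) a * a * cfcₙ (sqrtDivAbsAdd δ) a‖ ≤ 1 := by
  rw [cfcₙ_sqrtDivAbsAdd_mul_mul ha hε hδ]
  exact norm_cfcₙ_le fun t ht =>
    norm_sqrtDivAbsAdd_mul_mul_le_one hε hδ (quasispectrum_nonneg_of_nonneg a ha t ht)

lemma norm_cfcₙ_sqrtDivAbsAdd_mul_mul_mul_sub_le (ha : 0 ≤ a) {ε δ : ℝ} (hε : 0 < ε)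
    (hδ : 0 < δ) :
    ‖cfcₙ (sqrtDivAbsAdd ε) a * a * cfcₙ (sqrtDivAbsAdd δ) a * a - a‖ ≤ 2 * (ε + δ) := by
  have : IsSelfAdjoint a := .of_nonneg ha
  rw [cfcₙ_sqrtDivAbsAdd_mul_mul ha hε hδ]
  have hcalc : cfcₙ (fun t => sqrtDivAbsAdd ε t * t * sqrtDivAbsAdd δ t * t - t) a
      = cfcₙ (fun t => sqrtDivAbsAdd ε t * t * sqrtDivAbsAdd δ t) a * a - a := by
    rw [cfcₙ_sub (fun t => sqrtDivAbsAdd ε t * t * sqrtDivAbsAdd δ t * t) (fun t => t),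
      cfcₙ_mul (fun t => sqrtDivAbsAdd ε t * t * sqrtDivAbsAdd δ t) (fun t => t), cfcₙ_id' ℝ a]
  rw [← hcalc]
  exact norm_cfcₙ_le fun t ht =>
    norm_sqrtDivAbsAdd_mul_mul_mul_sub_le hε hδ (quasispectrum_nonneg_of_nonneg a ha t ht)

end CFC

theorem exists_star_mul_self_eq_of_mem_closure {w e : A} (he : IsStarProjection e)
    (hmem : e ∈ closure (Set.range (w * star w * ·))) :
    ∃ v, star v * v = e ∧ v * star v ∈ closure (Set.range fun y => star w * y * w) := by
  set a := w * star w
  have ha : 0 ≤ a := mul_star_self_nonneg w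
  have hε (n : ℕ) : (0 : ℝ) < 1 / (n + 1) := by positivity
  set g : ℕ → A := fun n => cfcₙ (sqrtDivAbsAdd (1 / (n + 1))) a
  have hg (n : ℕ) : star (g n) = g n := (cfcₙ_predicate _ a : IsSelfAdjoint (g n)).star_eq
  have hunit : Tendsto (fun n : ℕ × ℕ => g n.1 * a * g n.2 * a) atTop (𝓝 a) := by
    rw [tendsto_iff_norm_sub_tendsto_zero]
    have hbound : Tendsto (fun n : ℕ × ℕ => 2 * (1 / (n.1 + 1 : ℝ) + 1 / (n.2 + 1))) atTop
        (𝓝 0) := by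
      have h := tendsto_one_div_add_atTop_nhds_zero_nat (𝕜 := ℝ)
      simpa using ((h.comp tendsto_fst_atTop).add (h.comp tendsto_snd_atTop)).const_mul 2
    exact squeeze_zero (fun _ => norm_nonneg _)
      (fun n => norm_cfcₙ_sqrtDivAbsAdd_mul_mul_mul_sub_le ha (hε _) (hε _)) hbound
  have he_lim : Tendsto (fun n : ℕ × ℕ => g n.1 * a * g n.2 * e) atTop (𝓝 e) :=
    tendsto_mul_of_mem_closure_range_mul
      (fun n => norm_cfcₙ_sqrtDivAbsAdd_mul_mul_le_one ha (hε _) (hε _)) hunit hmem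
  set x : ℕ → A := fun n => star w * g n * e
  have hx (n m : ℕ) : star (x n) * x m = e * (g n * a * g m * e) := by
    simp only [x, a, star_mul, star_star, hg, he.isSelfAdjoint.star_eq, mul_assoc]
  obtain ⟨v, hv, hvv⟩ := exists_tendsto_star_mul_self_eq (x := x) (e := e) (by
    simpa only [hx, he.isIdempotentElem.eq] using he_lim.const_mul e)
  refine ⟨v, hvv, mem_closure_of_tendsto (hv.mul hv.star) (.of_forall fun n => ?_)⟩
  refine ⟨g n * e * g n, ?_⟩
  simp only [x, star_mul, star_star, hg, he.isSelfAdjoint.star_eq, mul_assoc]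
  rw [← mul_assoc e e, he.isIdempotentElem.eq]

theorem purelyInfiniteOn_univ_of_full {p : A} (hp : IsStarProjection p)
    (hfull : ∀ I : TwoSidedIdeal A, IsClosed (I : Set A) → p ∈ I → I = ⊤)
    (hpi : PurelyInfiniteOn (CornerSet p)) : PurelyInfiniteOn (Set.univ : Set A) := by
  intro h _ hh hh0
  have hh_sa : IsSelfAdjoint h := .of_nonneg hh
  obtain ⟨c, hc⟩ : ∃ c, p * c * h ≠ 0 := by
    by_contra! hzero
    refine hh0 (hh_sa.eq_zero_of_mul_mul_self_eq_zero ?_)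
    refine mul_eq_zero_of_full hfull (S := Set.range (· * h)) ?_ ?_ h ⟨h, rfl⟩
    · rintro a _ ⟨b, rfl⟩
      exact ⟨a * b, mul_assoc a b h⟩
    · rintro _ ⟨b, rfl⟩
      rw [← mul_assoc, hzero]
  set w := p * c * h
  have ha_mem : w * star w ∈ CornerSet p := by
    simpa only [w, star_mul, hp.isSelfAdjoint.star_eq, mul_assoc] using
      mul_mul_mem_cornerSet hp.isIdempotentElem (c * h * (star h * star c))
  have ha_ne : w * star w ≠ 0 := mt (CStarRing.mul_star_self_eq_zero_iff w).mp hc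
  obtain ⟨e, s, -, -, he_idem, he_star, he_ne, hmem, hs⟩ :=
    hpi _ ha_mem (mul_star_self_nonneg w) ha_ne
  have he : IsStarProjection e := ⟨he_idem, he_star⟩
  obtain ⟨v, hv, hvmem⟩ := exists_star_mul_self_eq_of_mem_closure he (closure_mono (by
    rintro _ ⟨y, -, rfl⟩
    exact ⟨y * (w * star w), (mul_assoc _ _ _).symm⟩) hmem)
  refine ⟨v * star v, v * s * star v, trivial, trivial,
    (he.mul_star_self_of_star_mul_self_eq hv).isIdempotentElem, star_mul_star v v,
    fun h0 => he_ne ?_, closure_mono ?_ hvmem, IsNonUnitaryIsometryIn.conj hs he hv⟩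
  · rw [← hv, (CStarRing.mul_star_self_eq_zero_iff v).mp h0, mul_zero]
  · rintro _ ⟨y, rfl⟩
    exact ⟨star c * star p * y * p * c, trivial, by
      simp only [w, star_mul, hh_sa.star_eq, hp.isSelfAdjoint.star_eq, mul_assoc]⟩

/-- If `p` is a full projection in a C*-algebra `A` and the corner `pAp`
is simple and purely infinite, then `A` is simple and purely infinite. -/
theorem simple_purelyInfinite_of_full_corner
    (p : A) (hp_proj : IsIdempotentElem p ∧ star p = p)
    (hfull : ∀ I : TwoSidedIdeal A, IsClosed (I : Set A) → p ∈ I → I = ⊤)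
    (hcorner_simple : SimpleOn (CornerSet p))
    (hcorner_pi : PurelyInfiniteOn (CornerSet p)) :
    SimpleOn (Set.univ : Set A) ∧ PurelyInfiniteOn (Set.univ : Set A) := by
  have hp : IsStarProjection p := ⟨hp_proj.1, hp_proj.2⟩
  exact ⟨simpleOn_univ_of_full hp hfull hcorner_simple,
    purelyInfiniteOn_univ_of_full hp hfull hcorner_pi⟩
end

section
/- Let 𝔄 be a C*-algebra, n ≥ 1, and suppose 𝔄_{(-∞,0]} ⊆ 𝔄_{(-∞,n]} ⊆ 𝔄 are C*-subalgebras such that p₁ ∈ 𝔄_{(-∞,0]} is a projection that is full in 𝔄_{(-∞,0]}, and x ↦ w* x w implements an isomorphism p₁ 𝔄_{(-∞,n]} p₁ ≅ 𝔄_{(-∞,n−1]}. Then: if 𝔄_{(-∞,0]} is simple and each 𝔄_{(-∞,k]} for k < n is simple, then 𝔄_{(-∞,n]} is simple. (Induction step: fullness of p₁ in 𝔄_{(-∞,n]} plus simplicity of the corner p₁𝔄_{(-∞,n]}p₁ gives simplicity of 𝔄_{(-∞,n]}.) -/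
variable {A : Type*} [NonUnitalCStarAlgebra A]

/-- `S` is the carrier of a closed *-subalgebra of `A`. -/
def IsCstarSubset (S : Set A) : Prop :=
  IsClosed S ∧ (0 : A) ∈ S ∧ (∀ x ∈ S, ∀ y ∈ S, x + y ∈ S) ∧
    (∀ (c : ℂ), ∀ x ∈ S, c • x ∈ S) ∧ (∀ x ∈ S, ∀ y ∈ S, x * y ∈ S) ∧
    (∀ x ∈ S, star x ∈ S)

/-- The corner `p S p` of the subalgebra with carrier `S`. -/
def CornerIn (p : A) (S : Set A) : Set A := {x : A | x ∈ S ∧ x = p * x * p}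

/-- Claim 3.4, induction step: given a nested family of C*-subalgebras
`𝔄_{(-∞,k]}` of `𝔄`, a projection `p₁ ∈ 𝔄_{(-∞,0]}` full in `𝔄_{(-∞,0]}`, and a
partial isometry `w` with `w w* = p₁` such that `x ↦ w* x w` maps
`p₁ 𝔄_{(-∞,k]} p₁` isomorphically onto `𝔄_{(-∞,k−1]}` for each `k ≥ 1`: if
`𝔄_{(-∞,0]}` is simple and `𝔄_{(-∞,k]}` is simple for all `k < n`, then `𝔄_{(-∞,n]}`
is simple. -/
theorem induction_step_simplicity
    (S : ℕ → Set A) (hS : ∀ k : ℕ, IsCstarSubset (S k))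
    (hnested : ∀ k : ℕ, S k ⊆ S (k + 1))
    (p₁ w : A)
    (hp₁_proj : IsIdempotentElem p₁ ∧ star p₁ = p₁)
    (hp₁_mem : p₁ ∈ S 0)
    (hw : w * star w = p₁) (hw_pi : w * star w * w = w)
    (hp₁_full : ∀ J : Set A, IsIdealIn (S 0) J → IsClosed J → p₁ ∈ J → J = S 0)
    (hconj : ∀ k : ℕ, 1 ≤ k →
      Set.BijOn (fun x => star w * x * w) (CornerIn p₁ (S k)) (S (k - 1)))
    (n : ℕ) (hn : 1 ≤ n)
    (h0 : SimpleOn (S 0))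
    (hk : ∀ k : ℕ, k < n → SimpleOn (S k)) :
    SimpleOn (S n) := by
  have hpp : p₁ * p₁ = p₁ := hp₁_proj.1
  have hp₁_star : star p₁ = p₁ := hp₁_proj.2
  have hmono : ∀ {i j : ℕ}, i ≤ j → S i ⊆ S j := by
    intro i j h
    induction h with
    | refl => exact subset_rfl
    | step _ ih => exact ih.trans (hnested _)
  have hp₁w : p₁ * w = w := by rw [← hw]; exact hw_pi
  have hwp₁ : star w * p₁ = star w := by
    have h := congrArg star hp₁w
    rwa [star_mul, hp₁_star] at h
  -- the key identity: q s q = s for all s ∈ S n, where q = w* w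
  have hqsq : ∀ s ∈ S n, (star w * w) * s * (star w * w) = s := by
    intro s hs
    have hsur := (hconj (n + 1) (by omega)).surjOn
    rw [Nat.add_sub_cancel] at hsur
    obtain ⟨y, hy, hys⟩ := hsur hs
    have hys' : star w * y * w = s := hys
    obtain ⟨hySn, hyc⟩ := hy
    calc (star w * w) * s * (star w * w)
        = (star w * w) * (star w * y * w) * (star w * w) := by rw [hys']
      _ = star w * (w * star w * (y * (w * star w))) * w := by simp only [mul_assoc]
      _ = star w * (p₁ * (y * p₁)) * w := by rw [hw]
      _ = star w * (p₁ * y * p₁) * w := by simp only [mul_assoc]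
      _ = star w * y * w := by rw [← hyc]
      _ = s := hys'
  -- corner helpers
  have hcorner_left : ∀ {x : A}, x = p₁ * x * p₁ → p₁ * x = x := by
    intro x hx
    conv_lhs => rw [hx]
    rw [← mul_assoc, ← mul_assoc, hpp, ← hx]
  have hcorner_right : ∀ {x : A}, x = p₁ * x * p₁ → x * p₁ = x := by
    intro x hx
    conv_lhs => rw [hx]
    rw [mul_assoc (p₁ * x) p₁ p₁, hpp, ← hx]
  have hp₁corner : p₁ ∈ CornerIn p₁ (S n) := ⟨hmono (Nat.zero_le n) hp₁_mem, by rw [hpp, hpp]⟩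
  have hconjp₁ : star w * p₁ * w = star w * w := by rw [hwp₁]
  have hqSm : star w * w ∈ S (n - 1) := by
    have h : star w * p₁ * w ∈ S (n - 1) := (hconj n hn).mapsTo hp₁corner
    rwa [hconjp₁] at h
  -- fullness of p₁ in S n
  have hfull : ∀ I : Set A, IsIdealIn (S n) I → IsClosed I → p₁ ∈ I → I = S n := by
    intro I hI hIcl hp₁I
    by_cases hp0 : p₁ = 0
    · have hw0 : w = 0 := by rw [← hp₁w, hp0, zero_mul]
      apply Set.Subset.antisymm hI.1
      intro s hs
      have h := hqsq s hs
      rw [hw0] at h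
      simp only [star_zero, mul_zero, zero_mul] at h
      rw [← h]
      exact hI.2.1
    · have hI' : IsIdealIn (S (n - 1)) (I ∩ S (n - 1)) := by
        refine ⟨Set.inter_subset_right, ⟨hI.2.1, (hS _).2.1⟩, ?_, ?_, ?_⟩
        · intro x hx y hy
          exact ⟨hI.2.2.1 x hx.1 y hy.1, (hS _).2.2.1 x hx.2 y hy.2⟩
        · intro c x hx
          exact ⟨hI.2.2.2.1 c x hx.1, (hS _).2.2.2.1 c x hx.2⟩
        · intro x hx s hs
          have hsn : s ∈ S n := hmono (by omega) hs
          exact ⟨⟨(hI.2.2.2.2 x hx.1 s hsn).1, (hS _).2.2.2.2.1 s hs x hx.2⟩,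
                 ⟨(hI.2.2.2.2 x hx.1 s hsn).2, (hS _).2.2.2.2.1 x hx.2 s hs⟩⟩
      rcases hk (n - 1) (by omega) _ hI' (hIcl.inter (hS _).1) with h0' | hSm
      · exfalso
        have hmem : p₁ ∈ I ∩ S (n - 1) := ⟨hp₁I, hmono (Nat.zero_le _) hp₁_mem⟩
        rw [h0'] at hmem
        exact hp0 hmem
      · have hsub : S (n - 1) ⊆ I := by
          intro x hx
          rw [← hSm] at hx
          exact hx.1
        have hqI : star w * w ∈ I := hsub hqSm
        apply Set.Subset.antisymm hI.1
        intro s hs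
        have h1 : s * (star w * w) ∈ I := (hI.2.2.2.2 _ hqI s hs).1
        have h2 : (star w * w) * (s * (star w * w)) ∈ I :=
          (hI.2.2.2.2 _ h1 _ (hmono (by omega) hqSm)).1
        rwa [← mul_assoc, hqsq s hs] at h2
  -- now the main argument
  intro J hJ hJcl
  have hp₁Sn : p₁ ∈ S n := hmono (Nat.zero_le n) hp₁_mem
  -- the corner of J and its image
  have hKsub : ∀ {x : A}, x ∈ J ∧ x = p₁ * x * p₁ → x ∈ CornerIn p₁ (S n) :=
    fun hx => ⟨hJ.1 hx.1, hx.2⟩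
  -- the image ideal
  have hJCideal : IsIdealIn (S (n - 1))
      ((fun z => star w * z * w) '' {x | x ∈ J ∧ x = p₁ * x * p₁}) := by
    refine ⟨?_, ?_, ?_, ?_, ?_⟩
    · rintro _ ⟨x, hx, rfl⟩
      exact (hconj n hn).mapsTo (hKsub hx)
    · exact ⟨0, ⟨hJ.2.1, by simp⟩, by simp⟩
    · rintro _ ⟨x, hx, rfl⟩ _ ⟨y, hy, rfl⟩
      refine ⟨x + y, ⟨hJ.2.2.1 x hx.1 y hy.1, ?_⟩, ?_⟩
      · rw [mul_add, add_mul, ← hx.2, ← hy.2]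
      · show star w * (x + y) * w = star w * x * w + star w * y * w
        rw [mul_add, add_mul]
    · rintro c _ ⟨x, hx, rfl⟩
      refine ⟨c • x, ⟨hJ.2.2.2.1 c x hx.1, ?_⟩, ?_⟩
      · rw [mul_smul_comm, smul_mul_assoc, ← hx.2]
      · show star w * (c • x) * w = c • (star w * x * w)
        rw [mul_smul_comm, smul_mul_assoc]
    · rintro _ ⟨x, hx, rfl⟩ s hsm
      obtain ⟨t, ht, hts⟩ := (hconj n hn).surjOn hsm
      have hts' : star w * t * w = s := hts
      obtain ⟨htSn, htc⟩ := ht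
      have htp : t * p₁ = t := hcorner_right htc
      have hpt : p₁ * t = t := hcorner_left htc
      have hxp : x * p₁ = x := hcorner_right hx.2
      have hpx : p₁ * x = x := hcorner_left hx.2
      constructor
      · refine ⟨t * x, ⟨(hJ.2.2.2.2 x hx.1 t htSn).1, ?_⟩, ?_⟩
        · rw [← mul_assoc, hpt, mul_assoc, hxp]
        · show star w * (t * x) * w = s * (star w * x * w)
          rw [← hts']
          have heq : (star w * t * w) * (star w * x * w)
              = star w * (t * (w * star w) * x) * w := by simp only [mul_assoc]
          rw [heq, hw, htp]
      · refine ⟨x * t, ⟨(hJ.2.2.2.2 x hx.1 t htSn).2, ?_⟩, ?_⟩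
        · rw [← mul_assoc, hpx, mul_assoc, htp]
        · show star w * (x * t) * w = (star w * x * w) * s
          rw [← hts']
          have heq : (star w * x * w) * (star w * t * w)
              = star w * (x * (w * star w) * t) * w := by simp only [mul_assoc]
          rw [heq, hw, hxp]
  -- closedness of the image ideal
  have hKcl : IsClosed {x : A | x ∈ J ∧ x = p₁ * x * p₁} :=
    hJcl.inter (isClosed_eq continuous_id
      ((continuous_const.mul continuous_id).mul continuous_const))
  have hJCeq : (fun z => star w * z * w) '' {x | x ∈ J ∧ x = p₁ * x * p₁}
      = S (n - 1) ∩ (fun y => w * y * star w) ⁻¹' {x | x ∈ J ∧ x = p₁ * x * p₁} := by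
    ext y
    constructor
    · rintro ⟨x, hx, rfl⟩
      refine ⟨(hconj n hn).mapsTo (hKsub hx), ?_⟩
      show w * (star w * x * w) * star w ∈ {x | x ∈ J ∧ x = p₁ * x * p₁}
      have heq : w * (star w * x * w) * star w = (w * star w) * x * (w * star w) := by
        simp only [mul_assoc]
      rw [heq, hw, ← hx.2]
      exact hx
    · rintro ⟨hySm, hyK⟩
      refine ⟨w * y * star w, hyK, ?_⟩
      show star w * (w * y * star w) * w = y
      have heq : star w * (w * y * star w) * w = (star w * w) * y * (star w * w) := by
        simp only [mul_assoc]
      rw [heq, hqsq y (hmono (by omega) hySm)]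
  have hJCcl : IsClosed ((fun z => star w * z * w) '' {x | x ∈ J ∧ x = p₁ * x * p₁}) := by
    rw [hJCeq]
    exact (hS _).1.inter (hKcl.preimage
      ((continuous_const.mul continuous_id).mul continuous_const))
  rcases hk (n - 1) (by omega) _ hJCideal hJCcl with hz | hall
  · -- the image ideal is zero: J = {0}
    left
    have hcorner0 : ∀ x ∈ J, p₁ * x * p₁ = 0 := by
      intro x hx
      have hmem : p₁ * x * p₁ ∈ {x : A | x ∈ J ∧ x = p₁ * x * p₁} := by
        refine ⟨?_, ?_⟩
        · have h1 : p₁ * x ∈ J := (hJ.2.2.2.2 x hx p₁ hp₁Sn).1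
          exact (hJ.2.2.2.2 _ h1 p₁ hp₁Sn).2
        · rw [← mul_assoc, ← mul_assoc, hpp, mul_assoc (p₁ * x), hpp]
      have h0' : star w * (p₁ * x * p₁) * w = 0 := by
        have hin : (fun z => star w * z * w) (p₁ * x * p₁)
            ∈ (fun z => star w * z * w) '' {x | x ∈ J ∧ x = p₁ * x * p₁} :=
          ⟨_, hmem, rfl⟩
        rw [hz] at hin
        exact hin
      have heq : star w * (p₁ * x * p₁) * w = star w * 0 * w := by
        rw [h0']; simp
      exact (hconj n hn).injOn (hKsub hmem) ⟨(hS n).2.1, by simp⟩ heq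
    have hpx0 : ∀ x ∈ J, p₁ * x = 0 := by
      intro x hx
      have hxx : x * star x ∈ J :=
        (hJ.2.2.2.2 x hx (star x) ((hS n).2.2.2.2.2 x (hJ.1 hx))).2
      have h := hcorner0 _ hxx
      have h2 : (p₁ * x) * star (p₁ * x) = 0 := by
        rw [star_mul, hp₁_star]
        calc p₁ * x * (star x * p₁) = p₁ * (x * star x) * p₁ := by simp only [mul_assoc]
          _ = 0 := h
      exact (CStarRing.mul_star_self_eq_zero_iff _).mp h2
    have hxp0 : ∀ x ∈ J, x * p₁ = 0 := by
      intro x hx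
      have hxx : star x * x ∈ J :=
        (hJ.2.2.2.2 x hx (star x) ((hS n).2.2.2.2.2 x (hJ.1 hx))).1
      have h := hcorner0 _ hxx
      have h2 : star (x * p₁) * (x * p₁) = 0 := by
        rw [star_mul, hp₁_star]
        calc p₁ * star x * (x * p₁) = p₁ * (star x * x) * p₁ := by simp only [mul_assoc]
          _ = 0 := h
      exact (CStarRing.star_mul_self_eq_zero_iff _).mp h2
    -- the annihilator ideal of J in S n
    have hIideal : IsIdealIn (S n) {s : A | s ∈ S n ∧ ∀ y ∈ J, y * s = 0} := by
      refine ⟨fun s hs => hs.1, ⟨(hS n).2.1, fun y _ => mul_zero y⟩, ?_, ?_, ?_⟩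
      · intro a ha b hb
        exact ⟨(hS n).2.2.1 a ha.1 b hb.1,
          fun y hy => by rw [mul_add, ha.2 y hy, hb.2 y hy, add_zero]⟩
      · intro c a ha
        exact ⟨(hS n).2.2.2.1 c a ha.1,
          fun y hy => by rw [mul_smul_comm, ha.2 y hy, smul_zero]⟩
      · intro a ha s hs
        refine ⟨⟨(hS n).2.2.2.2.1 s hs a ha.1, fun y hy => ?_⟩,
                ⟨(hS n).2.2.2.2.1 a ha.1 s hs, fun y hy => ?_⟩⟩
        · rw [← mul_assoc]
          exact ha.2 _ (hJ.2.2.2.2 y hy s hs).2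
        · rw [← mul_assoc, ha.2 y hy, zero_mul]
    have hIcl : IsClosed {s : A | s ∈ S n ∧ ∀ y ∈ J, y * s = 0} := by
      have heq : {s : A | s ∈ S n ∧ ∀ y ∈ J, y * s = 0}
          = S n ∩ ⋂ y ∈ J, {s : A | y * s = 0} := by
        ext s
        simp only [Set.mem_inter_iff, Set.mem_setOf_eq, Set.mem_iInter]
      rw [heq]
      exact (hS n).1.inter (isClosed_biInter fun y hy =>
        isClosed_eq (continuous_const.mul continuous_id) continuous_const)
    have hIfull := hfull _ hIideal hIcl ⟨hp₁Sn, fun y hy => hxp0 y hy⟩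
    ext x
    simp only [Set.mem_singleton_iff]
    constructor
    · intro hx
      have hstar : star x ∈ {s : A | s ∈ S n ∧ ∀ y ∈ J, y * s = 0} := by
        rw [hIfull]
        exact (hS n).2.2.2.2.2 x (hJ.1 hx)
      exact (CStarRing.mul_star_self_eq_zero_iff x).mp (hstar.2 x hx)
    · rintro rfl
      exact hJ.2.1
  · -- the image ideal is everything: p₁ ∈ J and J = S n
    right
    have hqJC : star w * w ∈ (fun z => star w * z * w) '' {x | x ∈ J ∧ x = p₁ * x * p₁} := by
      rw [hall]
      exact hqSm
    obtain ⟨x, hxK, hx⟩ := hqJC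
    have heq : star w * x * w = star w * p₁ * w := by
      rw [hconjp₁]
      exact hx
    have hxp₁ : x = p₁ := (hconj n hn).injOn (hKsub hxK) hp₁corner heq
    exact hfull J hJ hJcl (hxp₁ ▸ hxK.1)
end
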